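/- arXiv:2411.12867 — 7 statements merged into one kernel-verified Lean document; each statement's English description precedes it below -/
import Mathlib

section
/- Let F be a field of characteristic p > 0 and let K be a profinite group such that p^∞ divides the pro-order of K. Then the only projective object of Mod_F(K) is the zero module. -/
/-- An action of a topological group `G` on `V` is *smooth* if every vector has an open
stabilizer. -/
def SmoothAction (G V : Type) [Group G] [TopologicalSpace G] [MulAction G V] : Prop :=
  ∀ v : V, IsOpen ((MulAction.stabilizer G v : Subgroup G) : Set G)

/-- `P` is a projective object of the category `Mod_F(G)` of smooth `F[G]`-modules:
for every surjective (`G`-equivariant, `F`-linear) morphism `f : V → W` of smooth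
`F[G]`-modules and every morphism `q : P → W` there exists a morphism `h : P → V` with
`f ∘ h = q`. -/
def IsProjectiveSmooth (F G : Type) [Field F] [Group G] [TopologicalSpace G]
    (P : Type) [AddCommGroup P] [Module F P] [DistribMulAction G P] [SMulCommClass G F P] :
    Prop :=
  ∀ (V W : Type)
    [AddCommGroup V] [Module F V] [DistribMulAction G V] [SMulCommClass G F V]
    [AddCommGroup W] [Module F W] [DistribMulAction G W] [SMulCommClass G F W],
    SmoothAction G V → SmoothAction G W →
    ∀ f : V →ₗ[F] W, (∀ (g : G) (v : V), f (g • v) = g • f v) → Function.Surjective f →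
    ∀ q : P →ₗ[F] W, (∀ (g : G) (x : P), q (g • x) = g • q x) →
    ∃ h : P →ₗ[F] V, (∀ (g : G) (x : P), h (g • x) = g • h x) ∧ ∀ x : P, f (h x) = q x

/-!
Every smooth module `P` is a quotient of `⨁_N P^N`, the sum over open normal subgroups `N`, so a
projective `P` embeds into it; it therefore suffices that every equivariant map `q : P → W`
vanishes when some open subgroup `N` acts trivially on `W`. Given `v : P`, choose an open normal
`N₀ ≤ N` fixing `v` and, using `p^∞ ∣ |K|`, an open normal `N' ≤ N₀` with `p ∣ [N₀ : N']`. Lift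
`q` along the trace `Map(K/N', W) → W`. The lift of `v` is `N₀`-invariant, hence constant on the
fibres of `K/N' → K/N₀`, which all have `[N₀ : N']` elements; so its trace `q v` is a multiple
of `p`, i.e. zero.
-/

theorem SmoothAction.of_isOpen_of_forall_smul_eq {G V : Type} [Group G] [TopologicalSpace G]
    [SeparatelyContinuousMul G] [MulAction G V] {N : Subgroup G} (hN : IsOpen (N : Set G))
    (hNV : ∀ n ∈ N, ∀ v : V, n • v = v) : SmoothAction G V :=
  fun v => Subgroup.isOpen_mono (fun n hn => hNV n hn v) hN

theorem SmoothAction.dfinsupp {G ι : Type} [Group G] [TopologicalSpace G]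
    [SeparatelyContinuousMul G] {β : ι → Type}
    [∀ i, AddCommMonoid (β i)] [∀ i, DistribMulAction G (β i)]
    (h : ∀ i, SmoothAction G (β i)) : SmoothAction G (Π₀ i, β i) := by
  classical
  intro s
  let U : OpenSubgroup G := s.support.inf fun i => ⟨MulAction.stabilizer G (s i), h i (s i)⟩
  refine Subgroup.isOpen_mono (fun g hg => ?_) U.isOpen
  ext i
  by_cases hi : i ∈ s.support
  · exact (Finset.inf_le (f := fun i => (⟨MulAction.stabilizer G (s i), h i (s i)⟩ :
      OpenSubgroup G)) hi hg : g • s i = s i)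
  · rw [DFinsupp.smul_apply, DFinsupp.notMem_support_iff.mp hi, smul_zero]

theorem OpenSubgroup.exists_openNormalSubgroup_le {G : Type} [Group G] [TopologicalSpace G]
    [IsTopologicalGroup G] [CompactSpace G] (H : OpenSubgroup G) :
    ∃ N : OpenNormalSubgroup G, (N : Subgroup G) ≤ H :=
  IsTopologicalGroup.exist_openNormalSubgroup_sub_clopen_nhds_of_one H.isClopen H.one_mem

theorem Subgroup.sum_quotient_eq_relIndex_nsmul {α W : Type} [Group α] [AddCommMonoid W]
    {s t : Subgroup α} (hst : s ≤ t) [Fintype (α ⧸ s)] [Fintype (α ⧸ t)]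
    (f : α ⧸ s → W) (g : α ⧸ t → W) (hfg : ∀ a : α, f a = g a) :
    ∑ x, f x = s.relIndex t • ∑ y, g y := by
  let e := Subgroup.quotientEquivProdOfLE hst
  have : Finite (t ⧸ s.subgroupOf t) := Finite.of_surjective (Prod.snd ∘ e)
    (Prod.snd_surjective.comp e.surjective)
  have := Fintype.ofFinite (t ⧸ s.subgroupOf t)
  calc ∑ x, f x = ∑ x, g (e x).1 := Fintype.sum_congr _ _ fun x => QuotientGroup.induction_on x hfg
    _ = ∑ z : (α ⧸ t) × (t ⧸ s.subgroupOf t), g z.1 := e.sum_comp fun z => g z.1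
    _ = ∑ y, s.relIndex t • g y := by
        rw [Fintype.sum_prod_type]
        simp only [Finset.sum_const, Finset.card_univ, Subgroup.relIndex, Subgroup.index,
          Nat.card_eq_fintype_card]
    _ = s.relIndex t • ∑ y, g y := Finset.smul_sum.symm

section FixedSubmodule

variable (F : Type) {G V : Type} [Semiring F] [Group G] [AddCommMonoid V] [Module F V]
  [DistribMulAction G V] [SMulCommClass G F V]

def fixedSubmodule (N : Subgroup G) : Submodule F V where
  carrier := MulAction.fixedPoints N V
  add_mem' ha hb n := by rw [smul_add, ha n, hb n]
  zero_mem' n := smul_zero n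
  smul_mem' c x hx n := by rw [Subgroup.smul_def, smul_comm, ← Subgroup.smul_def, hx n]

variable {F} (N : Subgroup G) [N.Normal]

instance : DistribMulAction G (fixedSubmodule F N (V := V)) where
  smul g x := ⟨g • (x : V), smul_mem_fixedPoints_of_normal g x.2⟩
  one_smul x := Subtype.ext (one_smul G (x : V))
  mul_smul g h x := Subtype.ext (mul_smul g h (x : V))
  smul_zero g := Subtype.ext (smul_zero g)
  smul_add g x y := Subtype.ext (smul_add g (x : V) y)

@[simp] theorem fixedSubmodule.coe_smul (g : G) (x : fixedSubmodule F N (V := V)) :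
    ((g • x : fixedSubmodule F N (V := V)) : V) = g • (x : V) := rfl

instance : SMulCommClass G F (fixedSubmodule F N (V := V)) :=
  ⟨fun g c x => Subtype.ext (smul_comm g c (x : V))⟩

theorem fixedSubmodule.smul_eq_self {n : G} (hn : n ∈ N) (x : fixedSubmodule F N (V := V)) :
    n • x = x :=
  Subtype.ext (x.2 ⟨n, hn⟩)

end FixedSubmodule

section SumFixedSubmodule

open scoped Classical

variable (F : Type) {K V : Type} [Semiring F] [Group K] [TopologicalSpace K] [AddCommMonoid V]
  [Module F V] [DistribMulAction K V] [SMulCommClass K F V]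

noncomputable def fixedSubmoduleSum :
    (Π₀ N : OpenNormalSubgroup K, fixedSubmodule F (N : Subgroup K) (V := V)) →ₗ[F] V :=
  DFinsupp.lsum ℕ fun N => (fixedSubmodule F (N : Subgroup K)).subtype

theorem fixedSubmoduleSum_single (N : OpenNormalSubgroup K)
    (x : fixedSubmodule F (N : Subgroup K) (V := V)) :
    fixedSubmoduleSum F (DFinsupp.single N x) = x :=
  DFinsupp.lsum_single ℕ
    (fun N : OpenNormalSubgroup K => (fixedSubmodule F (N : Subgroup K)).subtype) N x

theorem fixedSubmoduleSum_smul (g : K)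
    (s : Π₀ N : OpenNormalSubgroup K, fixedSubmodule F (N : Subgroup K) (V := V)) :
    fixedSubmoduleSum F (g • s) = g • fixedSubmoduleSum F s := by
  have : (fixedSubmoduleSum F (K := K) (V := V)).toAddMonoidHom.comp
      (DistribSMul.toAddMonoidHom _ g) =
      (DistribSMul.toAddMonoidHom V g).comp (fixedSubmoduleSum F).toAddMonoidHom :=
    DFinsupp.addHom_ext fun N x => by
      simp only [AddMonoidHom.comp_apply, DistribSMul.toAddMonoidHom_apply]
      rw [← DFinsupp.single_smul]
      simp only [LinearMap.toAddMonoidHom_coe, fixedSubmoduleSum_single, fixedSubmodule.coe_smul]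
  exact DFunLike.congr_fun this s

theorem fixedSubmoduleSum_surjective [IsTopologicalGroup K] [CompactSpace K]
    (hV : SmoothAction K V) : Function.Surjective (fixedSubmoduleSum F (K := K) (V := V)) := by
  intro v
  obtain ⟨N, hN⟩ := OpenSubgroup.exists_openNormalSubgroup_le ⟨_, hV v⟩
  exact ⟨DFinsupp.single N ⟨v, fun n => hN n.2⟩, fixedSubmoduleSum_single F N _⟩

end SumFixedSubmodule

/-- Functions `X → W` with the diagonal action `(g • ξ) x = g • ξ (g⁻¹ • x)`. -/
def DiagFun (X W : Type) : Type := X → W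

namespace DiagFun

variable {F G X W : Type} [Group G]

instance [AddCommGroup W] : AddCommGroup (DiagFun X W) := Pi.addCommGroup

instance [Semiring F] [AddCommGroup W] [Module F W] : Module F (DiagFun X W) := Pi.module _ _ _

instance [MulAction G X] [AddCommGroup W] [DistribMulAction G W] :
    DistribMulAction G (DiagFun X W) where
  smul g ξ x := g • ξ (g⁻¹ • x)
  one_smul ξ := funext fun x => by
    change (1 : G) • ξ ((1 : G)⁻¹ • x) = ξ x
    rw [inv_one, one_smul, one_smul]
  mul_smul g h ξ := funext fun x => by
    change (g * h) • ξ ((g * h)⁻¹ • x) = g • h • ξ (h⁻¹ • g⁻¹ • x)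
    rw [mul_inv_rev, mul_smul, mul_smul]
  smul_zero g := funext fun _ => smul_zero g
  smul_add g ξ η := funext fun _ => smul_add g _ _

theorem smul_apply [MulAction G X] [AddCommGroup W] [DistribMulAction G W]
    (g : G) (ξ : DiagFun X W) (x : X) : (g • ξ) x = g • ξ (g⁻¹ • x) := rfl

instance [Semiring F] [MulAction G X] [AddCommGroup W] [Module F W] [DistribMulAction G W]
    [SMulCommClass G F W] : SMulCommClass G F (DiagFun X W) :=
  ⟨fun g c ξ => funext fun x => smul_comm g c (ξ (g⁻¹ • x))⟩

variable (F) [Semiring F] [AddCommGroup W] [Module F W]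

def sum [Fintype X] : DiagFun X W →ₗ[F] W where
  toFun ξ := ∑ x, ξ x
  map_add' _ _ := Finset.sum_add_distrib
  map_smul' c ξ := (Finset.smul_sum (r := c) (f := fun x => ξ x) (s := Finset.univ)).symm

theorem sum_surjective [Fintype X] [Nonempty X] :
    Function.Surjective (sum F (X := X) (W := W)) := by
  classical
  intro w
  refine ⟨(Pi.single (Classical.arbitrary X) w : X → W), ?_⟩
  change ∑ x, (Pi.single (Classical.arbitrary X) w : X → W) x = w
  simp

theorem sum_smul [Fintype X] [MulAction G X] [DistribMulAction G W] (g : G) (ξ : DiagFun X W) :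
    sum F (g • ξ) = g • sum F ξ := by
  change ∑ x, g • ξ (g⁻¹ • x) = g • ∑ x, ξ x
  rw [← Finset.smul_sum]
  exact congrArg (g • ·) (Equiv.sum_comp (MulAction.toPerm g⁻¹) ξ)

variable {F} [MulAction G X] [DistribMulAction G W]

theorem smul_eq_self {g : G} (hX : ∀ x : X, g • x = x) (hW : ∀ w : W, g • w = w)
    (ξ : DiagFun X W) : g • ξ = ξ :=
  funext fun x => by rw [smul_apply, inv_smul_eq_iff.mpr (hX x).symm, hW]

theorem sum_eq_zero_of_relIndex_eq_zero {s t : Subgroup G} [t.Normal] (hst : s ≤ t)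
    [Fintype (G ⧸ s)] [Fintype (G ⧸ t)] (hrel : (s.relIndex t : F) = 0)
    (htW : ∀ n ∈ t, ∀ w : W, n • w = w) (ξ : DiagFun (G ⧸ s) W) (hξ : ∀ n ∈ t, n • ξ = ξ) :
    sum F ξ = 0 := by
  have hshift : ∀ n ∈ t, ∀ x, ξ (n • x) = ξ x := fun n hn x => by
    calc ξ (n • x) = (n • ξ) (n • x) := by rw [hξ n hn]
      _ = ξ x := by rw [smul_apply, inv_smul_smul, htW n hn]
  have hcoset : ∀ a : G, ξ a = ξ ((a : G ⧸ t).out : G) := fun a => by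
    have hmem : ((a : G ⧸ t).out : G) * a⁻¹ ∈ t :=
      (Subgroup.Normal.mem_comm_iff inferInstance).mp
        (QuotientGroup.eq.mp (a : G ⧸ t).out_eq'.symm)
    rw [← hshift _ hmem, MulAction.Quotient.smul_mk, smul_eq_mul, inv_mul_cancel_right]
  have hzero : ∀ w : W, s.relIndex t • w = 0 := fun w => by
    rw [← Nat.cast_smul_eq_nsmul F, hrel, zero_smul]
  exact (Subgroup.sum_quotient_eq_relIndex_nsmul hst _ (fun y => ξ (y.out : G)) hcoset).trans
    (hzero _)

end DiagFun

theorem OpenNormalSubgroup.exists_le_prime_dvd_relIndex {K : Type} [Group K]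
    [TopologicalSpace K] [SeparatelyContinuousMul K] [CompactSpace K] {p : ℕ} (hp : p.Prime)
    (hdiv : ∀ n : ℕ, ∃ N : Subgroup K, N.Normal ∧ IsOpen (N : Set K) ∧ p ^ n ∣ N.index)
    (N₀ : OpenNormalSubgroup K) :
    ∃ N : OpenNormalSubgroup K, N ≤ N₀ ∧ p ∣ (N : Subgroup K).relIndex N₀ := by
  obtain ⟨M, hMnormal, hMopen, hM⟩ := hdiv (N₀ : Subgroup K).index
  let N : OpenNormalSubgroup K := N₀ ⊓ ⟨⟨M, hMopen⟩, hMnormal⟩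
  have hle : (N : Subgroup K) ≤ N₀ := inf_le_left
  refine ⟨N, hle, ?_⟩
  have hn : (N₀ : Subgroup K).index ≠ 0 := Subgroup.index_ne_zero_of_finite
  have hdvd : p ^ (N₀ : Subgroup K).index ∣
      (N : Subgroup K).relIndex N₀ * (N₀ : Subgroup K).index := by
    rw [Subgroup.relIndex_mul_index hle]
    exact hM.trans (Subgroup.index_dvd_of_le inf_le_right)
  by_contra hpc
  have hcop : (p ^ (N₀ : Subgroup K).index).Coprime ((N : Subgroup K).relIndex N₀) :=
    Nat.Coprime.pow_left _ ((Nat.Prime.coprime_iff_not_dvd hp).mpr hpc)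
  exact absurd (Nat.le_of_dvd (Nat.pos_of_ne_zero hn) (hcop.dvd_of_dvd_mul_left hdvd))
    (Nat.lt_pow_self hp.one_lt).not_ge

section Projective

variable {F K P : Type} [Field F] [Group K] [TopologicalSpace K] [IsTopologicalGroup K]
  [CompactSpace K] [AddCommGroup P] [Module F P] [DistribMulAction K P] [SMulCommClass K F P]

theorem IsProjectiveSmooth.map_eq_zero_of_isOpen_of_smul_eq {p : ℕ} [CharP F p] (hp : p.Prime)
    (hdiv : ∀ n : ℕ, ∃ N : Subgroup K, N.Normal ∧ IsOpen (N : Set K) ∧ p ^ n ∣ N.index)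
    (hPsmooth : SmoothAction K P) (hPproj : IsProjectiveSmooth F K P)
    {W : Type} [AddCommGroup W] [Module F W] [DistribMulAction K W] [SMulCommClass K F W]
    {N : Subgroup K} (hN : IsOpen (N : Set K)) (hNW : ∀ n ∈ N, ∀ w : W, n • w = w)
    (q : P →ₗ[F] W) (hq : ∀ (g : K) (x : P), q (g • x) = g • q x) (v : P) : q v = 0 := by
  obtain ⟨N₀, hN₀⟩ :=
    OpenSubgroup.exists_openNormalSubgroup_le (⟨N, hN⟩ ⊓ ⟨_, hPsmooth v⟩)
  obtain ⟨N', hN'N₀, hpN'⟩ := OpenNormalSubgroup.exists_le_prime_dvd_relIndex hp hdiv N₀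
  have := Fintype.ofFinite (K ⧸ (N' : Subgroup K))
  have := Fintype.ofFinite (K ⧸ (N₀ : Subgroup K))
  have hN'V : ∀ n ∈ (N' : Subgroup K), ∀ ξ : DiagFun (K ⧸ (N' : Subgroup K)) W, n • ξ = ξ :=
    fun n hn => DiagFun.smul_eq_self
      (fun x => QuotientGroup.induction_on x fun a => by
        rw [MulAction.Quotient.smul_mk, smul_eq_mul, QuotientGroup.mk_mul,
          (QuotientGroup.eq_one_iff n).mpr hn, one_mul])
      (hNW n (hN₀ (hN'N₀ hn)).1)
  obtain ⟨h, hh, hsum⟩ := hPproj _ W (.of_isOpen_of_forall_smul_eq N'.isOpen hN'V)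
    (.of_isOpen_of_forall_smul_eq hN hNW) (DiagFun.sum F) (DiagFun.sum_smul F)
    (DiagFun.sum_surjective F) q hq
  rw [← hsum v]
  refine DiagFun.sum_eq_zero_of_relIndex_eq_zero hN'N₀ ((CharP.cast_eq_zero_iff F p _).mpr hpN')
    (fun n hn => hNW n (hN₀ hn).1) (h v) fun n hn => ?_
  rw [← hh, (hN₀ hn).2]

end Projective

theorem no_nonzero_projectives_profinite_general
    (F : Type) [Field F] (p : ℕ) (hp : p ≠ 0) [CharP F p]
    (K : Type) [Group K] [TopologicalSpace K] [IsTopologicalGroup K]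
    [CompactSpace K]
    (hdiv : ∀ n : ℕ, ∃ N : Subgroup K, N.Normal ∧ IsOpen (N : Set K) ∧ p ^ n ∣ N.index)
    (P : Type) [AddCommGroup P] [Module F P] [DistribMulAction K P] [SMulCommClass K F P]
    (hPsmooth : SmoothAction K P) (hPproj : IsProjectiveSmooth F K P) :
    Subsingleton P := by
  have hprime : p.Prime := (CharP.char_is_prime_or_zero F p).resolve_right hp
  obtain ⟨s, hs, hsec⟩ := hPproj
    (Π₀ N : OpenNormalSubgroup K, fixedSubmodule F (N : Subgroup K) (V := P)) P
    (.dfinsupp fun N => .of_isOpen_of_forall_smul_eq N.isOpen fun _ =>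
      fixedSubmodule.smul_eq_self _)
    hPsmooth (fixedSubmoduleSum F) (fixedSubmoduleSum_smul F)
    (fixedSubmoduleSum_surjective F hPsmooth) LinearMap.id fun _ _ => rfl
  have hs0 : ∀ v, s v = 0 := fun v => DFinsupp.ext fun N =>
    hPproj.map_eq_zero_of_isOpen_of_smul_eq hprime hdiv hPsmooth N.isOpen
      (fun _ => fixedSubmodule.smul_eq_self _) ((DFinsupp.lapply N).comp s)
      (fun g x => by simp [hs]) v
  exact subsingleton_of_forall_eq 0 fun v => by simpa [hs0] using (hsec v).symm

/-- Let `F` be a field of characteristic `p > 0` and let `K` be a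
profinite group such that `p^∞` divides the pro-order of `K` (i.e. for every `n` there is
an open normal subgroup `N ⊆ K` with `p ^ n ∣ [K : N]`).  Then the only projective object
of `Mod_F(K)` is the zero module. -/
theorem no_nonzero_projectives_profinite
    (F : Type) [Field F] (p : ℕ) (hp : p ≠ 0) [CharP F p]
    (K : Type) [Group K] [TopologicalSpace K] [IsTopologicalGroup K]
    [CompactSpace K] [T2Space K] [TotallyDisconnectedSpace K]
    (hdiv : ∀ n : ℕ, ∃ N : Subgroup K, N.Normal ∧ IsOpen (N : Set K) ∧ p ^ n ∣ N.index)
    (P : Type) [AddCommGroup P] [Module F P] [DistribMulAction K P] [SMulCommClass K F P]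
    (hPsmooth : SmoothAction K P) (hPproj : IsProjectiveSmooth F K P) :
    Subsingleton P :=
  no_nonzero_projectives_profinite_general F p hp K hdiv P hPsmooth hPproj
end

section
/- Let F be a field of characteristic p > 0, let G be a locally pro-p group, and suppose G admits an infinite open pro-p subgroup K such that the pair (G,K) is fair. Then the only projective object in the category Mod_F(G) of smooth F[G]-modules is the zero module. -/
/-- A topological group is *pro-`p`* if it is profinite and all of its finite continuous
quotients are `p`-groups; equivalently, every open normal subgroup has index a power
of `p`. -/
def IsProPGroup (p : ℕ) (K : Type) [Group K] [TopologicalSpace K] : Prop :=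
  ∀ N : Subgroup K, N.Normal → IsOpen (N : Set K) → ∃ n : ℕ, N.index = p ^ n

/-- A pair `(G, K)` consisting of a topological group `G` and a (profinite open) subgroup
`K ⊆ G` is *fair* if for every open subgroup `H ⊆ K` there exists an open subgroup `H' ⊆ K`
such that `K ∩ gH'g⁻¹ ⊊ K ∩ gHg⁻¹` (strict inclusion) for all `g ∈ G`. -/
def IsFair (G : Type) [Group G] [TopologicalSpace G] (K : Subgroup G) : Prop :=
  ∀ H : Subgroup G, H ≤ K → IsOpen (H : Set G) →
    ∃ H' : Subgroup G, H' ≤ K ∧ IsOpen (H' : Set G) ∧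
      ∀ g : G,
        K ⊓ Subgroup.map (MulAut.conj g).toMonoidHom H' <
          K ⊓ Subgroup.map (MulAut.conj g).toMonoidHom H

/-!
Suppose `P ≠ 0`. A smooth representation of the pro-`p` group `K` in characteristic `p` has a
nonzero `K`-fixed vector `v`: the additive group spanned by a `K`-orbit is finite of order
divisible by `p`, and its non-fixed points fall into orbits of length a positive power of `p`, so
the number of fixed points is a multiple of `p` as well.

Let `X = ⊔_w G/H_w` with `H_w = K ∩ Stab(w)`. The permutation module `F[X]` maps onto `P`, and
projectivity splits this surjection by an injection `s : P → F[X]`. Fairness provides open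
`H'_w ≤ H_w` such that the projection `π : Y = ⊔_w G/H'_w → X` strictly shrinks every
`K`-stabilizer, and projectivity lifts `s` through `π_* : F[Y] → F[X]`. For a `K`-invariant
`u ∈ F[Y]` the fibre of `π` over `x` splits into `Stab_K(x)`-orbits whose lengths are positive
powers of `p`, so `π_* u = 0`. Applied to the lift of `v`, this gives `s v = 0`, hence `v = 0`.
-/

open MulAction

theorem sum_eq_zero_of_dvd_index_stabilizer {M : Type*} [AddCommMonoid M] {p : ℕ}
    (hM : ∀ y : M, p • y = 0) {Γ X : Type*} [Group Γ] [MulAction Γ X] {T : Finset X}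
    {u : X → M} (hT : ∀ γ : Γ, ∀ x ∈ T, γ • x ∈ T) (hu : ∀ γ : Γ, ∀ x ∈ T, u (γ • x) = u x)
    (hfin : ∀ x ∈ T, (stabilizer Γ x).index ≠ 0) (hdvd : ∀ x ∈ T, p ∣ (stabilizer Γ x).index) :
    ∑ x ∈ T, u x = 0 := by
  classical
  refine Finset.sum_cancels_of_partition_cancels (orbitRel Γ X) fun x hx => ?_
  have horbit : (orbit Γ x).Finite :=
    Set.finite_of_ncard_ne_zero (index_stabilizer Γ x ▸ hfin x hx)
  have hclass : {a ∈ T | (orbitRel Γ X).r a x} = horbit.toFinset := by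
    ext a
    simp only [Finset.mem_filter, Set.Finite.mem_toFinset, orbitRel_apply]
    refine ⟨And.right, ?_⟩
    rintro ⟨γ, rfl⟩
    exact ⟨hT γ x hx, γ, rfl⟩
  obtain ⟨m, hm⟩ := hdvd x hx
  calc ∑ a ∈ T with (orbitRel Γ X).r a x, u a
      = ∑ _a ∈ horbit.toFinset, u x := by
        rw [hclass]
        refine Finset.sum_congr rfl fun a ha => ?_
        obtain ⟨γ, rfl⟩ := horbit.mem_toFinset.mp ha
        exact hu γ x hx
    _ = 0 := by
        rw [Finset.sum_const, ← Set.ncard_eq_toFinset_card _ horbit, ← index_stabilizer, hm,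
          mul_nsmul', hM]

theorem AddSubgroup.finite_closure_of_forall_nsmul_eq_zero {M : Type*} [AddCommGroup M] {p : ℕ}
    (hp : p ≠ 0) (hM : ∀ x : M, p • x = 0) {S : Set M} (hS : S.Finite) :
    Finite (AddSubgroup.closure S) :=
  have := hS.to_subtype
  AddCommGroup.finite_of_fg_isAddTorsion _ fun y =>
    isOfFinAddOrder_iff_nsmul_eq_zero.mpr ⟨p, Nat.pos_of_ne_zero hp, Subtype.ext (hM y)⟩

namespace IsProPGroup

variable {p : ℕ} {K : Type} [Group K] [TopologicalSpace K] [IsTopologicalGroup K] [CompactSpace K]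

theorem index_eq_prime_pow (hp : p.Prime) (hK : IsProPGroup p K) {B : Subgroup K}
    (hB : IsOpen (B : Set K)) : ∃ m : ℕ, B.index = p ^ m := by
  obtain ⟨N, hNB⟩ := IsTopologicalGroup.exist_openNormalSubgroup_sub_clopen_nhds_of_one
    ⟨B.isClosed_of_isOpen hB, hB⟩ B.one_mem
  obtain ⟨n, hn⟩ := hK N.toSubgroup N.isNormal' N.isOpen
  obtain ⟨m, -, hm⟩ := (Nat.dvd_prime_pow hp).mp (hn ▸ Subgroup.index_dvd_of_le hNB)
  exact ⟨m, hm⟩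

theorem index_ne_zero (hp : p.Prime) (hK : IsProPGroup p K) {B : Subgroup K}
    (hB : IsOpen (B : Set K)) : B.index ≠ 0 := by
  obtain ⟨m, hm⟩ := index_eq_prime_pow hp hK hB
  exact hm ▸ pow_ne_zero m hp.ne_zero

theorem relIndex_ne_zero (hp : p.Prime) (hK : IsProPGroup p K) {A B : Subgroup K}
    (hB : IsOpen (B : Set K)) (hBA : B ≤ A) : B.relIndex A ≠ 0 :=
  ne_zero_of_dvd_ne_zero (index_ne_zero hp hK hB) (Subgroup.relIndex_dvd_index_of_le hBA)

theorem dvd_relIndex (hp : p.Prime) (hK : IsProPGroup p K) {A B : Subgroup K}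
    (hB : IsOpen (B : Set K)) (hBA : B < A) : p ∣ B.relIndex A := by
  obtain ⟨m, hm⟩ := index_eq_prime_pow hp hK hB
  obtain ⟨k, -, hk⟩ :=
    (Nat.dvd_prime_pow hp).mp (hm ▸ Subgroup.relIndex_dvd_index_of_le hBA.le)
  rcases k with _ | k
  · exact absurd (Subgroup.relIndex_eq_one.mp (hk.trans (pow_zero p))) hBA.not_ge
  · exact hk ▸ dvd_pow_self p k.succ_ne_zero

open Classical in
theorem card_modEq_card_filter_fixed (hp : p.Prime) (hK : IsProPGroup p K) {X : Type*}
    [MulAction K X] (hX : ∀ x : X, IsOpen (stabilizer K x : Set K)) (T : Finset X)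
    (hT : ∀ k : K, ∀ x ∈ T, k • x ∈ T) :
    T.card ≡ (T.filter fun x => ∀ k : K, k • x = x).card [MOD p] := by
  have hpZ : ∀ y : ZMod p, p • y = 0 := fun y => by
    rw [nsmul_eq_mul, ZMod.natCast_self, zero_mul]
  have hmoved : ∑ x ∈ T.filter (fun x => ¬ ∀ k : K, k • x = x), (1 : ZMod p) = 0 := by
    refine sum_eq_zero_of_dvd_index_stabilizer hpZ ?_ (fun _ _ _ => rfl)
      (fun x _ => index_ne_zero hp hK (hX x)) fun x hx => ?_
    · intro k x hx
      simp only [Finset.mem_filter] at hx ⊢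
      refine ⟨hT k x hx.1, fun hfix => hx.2 fun l => ?_⟩
      simpa [smul_smul] using congrArg (k⁻¹ • ·) (hfix (k * l * k⁻¹))
    · have hlt : stabilizer K x < ⊤ := by
        refine lt_top_iff_ne_top.mpr fun htop => (Finset.mem_filter.mp hx).2 fun k => ?_
        exact mem_stabilizer_iff.mp (htop ▸ Subgroup.mem_top k)
      simpa using dvd_relIndex hp hK (hX x) hlt
  rw [← ZMod.natCast_eq_natCast_iff, ← Finset.card_filter_add_card_filter_not
    (fun x => ∀ k : K, k • x = x)]
  simpa using hmoved

theorem exists_ne_zero_forall_smul_eq_self (hp : p.Prime) (hK : IsProPGroup p K) {M : Type*}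
    [AddCommGroup M] [DistribMulAction K M] [Nontrivial M] (hM : ∀ x : M, p • x = 0)
    (hstab : ∀ x : M, IsOpen (stabilizer K x : Set K)) :
    ∃ v : M, v ≠ 0 ∧ ∀ k : K, k • v = v := by
  classical
  have : Fact p.Prime := ⟨hp⟩
  obtain ⟨v₀, hv₀⟩ := exists_ne (0 : M)
  have horbit : (orbit K v₀).Finite :=
    Set.finite_of_ncard_ne_zero (index_stabilizer K v₀ ▸ index_ne_zero hp hK (hstab v₀))
  set Y := AddSubgroup.closure (orbit K v₀)
  have : Finite Y := AddSubgroup.finite_closure_of_forall_nsmul_eq_zero hp.ne_zero hM horbit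
  have hY : ∀ k : K, ∀ y ∈ Y, k • y ∈ Y := fun k =>
    (AddSubgroup.closure_le (K := Y.comap (DistribSMul.toAddMonoidHom M k))).mpr
      (by rintro _ ⟨γ, rfl⟩; exact AddSubgroup.subset_closure ⟨k * γ, mul_smul k γ v₀⟩)
  let T := (Y : Set M).toFinite.toFinset
  have hpT : p ∣ T.card := by
    have hv₀Y : v₀ ∈ Y := AddSubgroup.subset_closure (mem_orbit_self v₀)
    have hord : addOrderOf (⟨v₀, hv₀Y⟩ : Y) = p :=
      addOrderOf_eq_prime (Subtype.ext (hM v₀)) (fun h => hv₀ (congrArg Subtype.val h))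
    rw [← Set.ncard_eq_toFinset_card _ (Y : Set M).toFinite, ← Nat.card_coe_set_eq, ← hord]
    exact addOrderOf_dvd_natCard _
  have hfixed : p ∣ (T.filter fun x => ∀ k : K, k • x = x).card := by
    refine Nat.modEq_zero_iff_dvd.mp ?_
    refine (card_modEq_card_filter_fixed hp hK hstab T fun k y hy => ?_).symm.trans
      (Nat.modEq_zero_iff_dvd.mpr hpT)
    simpa [T] using hY k y (by simpa [T] using hy)
  have hzero : 0 ∈ T.filter fun x => ∀ k : K, k • x = x := by
    simp [T]
  obtain ⟨v, hv, hv0⟩ := Finset.exists_mem_ne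
    (hp.one_lt.trans_le (Nat.le_of_dvd (Finset.card_pos.mpr ⟨0, hzero⟩) hfixed)) 0
  exact ⟨v, hv0, (Finset.mem_filter.mp hv).2⟩

theorem mapDomain_eq_zero_of_stabilizer_lt (hp : p.Prime) (hK : IsProPGroup p K) {M : Type*}
    [AddCommMonoid M] (hM : ∀ y : M, p • y = 0) {α β : Type*} [MulAction K α] [MulAction K β]
    {π : β → α} (hπ : ∀ (k : K) (x : β), π (k • x) = k • π x)
    (hβ : ∀ x : β, IsOpen (stabilizer K x : Set K))
    (hlt : ∀ x : β, stabilizer K x < stabilizer K (π x))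
    {u : β →₀ M} (hu : ∀ (k : K) (x : β), u (k • x) = u x) : u.mapDomain π = 0 := by
  classical
  ext a
  have hfibre : u.mapDomain π a = ∑ x ∈ u.support with π x = a, u x := by
    simp [Finsupp.mapDomain, Finsupp.sum, Finsupp.single_apply, Finset.sum_ite]
  rw [hfibre, Finsupp.coe_zero, Pi.zero_apply]
  have hindex : ∀ x : β,
      (stabilizer (stabilizer K a) x).index = (stabilizer K x).relIndex (stabilizer K a) :=
    fun x => rfl
  refine sum_eq_zero_of_dvd_index_stabilizer (Γ := stabilizer K a) hM ?_
    (fun γ x _ => hu γ x) (fun x hx => ?_) (fun x hx => ?_)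
  · intro γ x hx
    simp only [Finset.mem_filter, Finsupp.mem_support_iff] at hx ⊢
    exact ⟨(hu γ x).symm ▸ hx.1, (hπ γ x).trans (hx.2 ▸ γ.2)⟩
  · obtain ⟨-, rfl⟩ := Finset.mem_filter.mp hx
    exact hindex x ▸ relIndex_ne_zero hp hK (hβ x) (hlt x).le
  · obtain ⟨-, rfl⟩ := Finset.mem_filter.mp hx
    exact hindex x ▸ dvd_relIndex hp hK (hβ x) (hlt x)

end IsProPGroup

section QuotientSets

variable {G : Type} [Group G]

theorem stabilizer_quotientGroup_mk (H : Subgroup G) (g : G) :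
    stabilizer G (g : G ⧸ H) = H.map (MulAut.conj g).toMonoidHom := by
  have := stabilizer_smul_eq_stabilizer_map_conj g ((1 : G) : G ⧸ H)
  rwa [stabilizer_quotient, MulAction.Quotient.smul_mk, smul_eq_mul, mul_one] at this

theorem stabilizer_sigma_mk {ι : Type*} {X : ι → Type*} [∀ i, MulAction G (X i)] (i : ι)
    (y : X i) : stabilizer G (⟨i, y⟩ : Σ i, X i) = stabilizer G y := by
  ext g
  simp [mem_stabilizer_iff, Sigma.smul_mk]

theorem stabilizer_subgroup_sigma_mk {ι : Type*} {X : ι → Type*} [∀ i, MulAction G (X i)]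
    (K : Subgroup G) (i : ι) (y : X i) :
    stabilizer K (⟨i, y⟩ : Σ i, X i) = stabilizer K y :=
  congrArg (Subgroup.subgroupOf · K) (stabilizer_sigma_mk i y)

theorem quotientMapOfLE_smul {H H' : Subgroup G} (h : H' ≤ H) (g : G) (y : G ⧸ H') :
    Subgroup.quotientMapOfLE h (g • y) = g • Subgroup.quotientMapOfLE h y := by
  induction y using QuotientGroup.induction_on
  rfl

theorem quotientMapOfLE_surjective {H H' : Subgroup G} (h : H' ≤ H) :
    Function.Surjective (Subgroup.quotientMapOfLE h) := fun y =>
  QuotientGroup.induction_on y fun g => ⟨g, rfl⟩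

def sigmaQuotientMapOfLE {ι : Type*} {H H' : ι → Subgroup G} (h : ∀ i, H' i ≤ H i)
    (x : Σ i, G ⧸ H' i) : Σ i, G ⧸ H i :=
  ⟨x.1, Subgroup.quotientMapOfLE (h x.1) x.2⟩

theorem sigmaQuotientMapOfLE_smul {ι : Type*} {H H' : ι → Subgroup G} (h : ∀ i, H' i ≤ H i)
    (g : G) (x : Σ i, G ⧸ H' i) :
    sigmaQuotientMapOfLE h (g • x) = g • sigmaQuotientMapOfLE h x :=
  congrArg (Sigma.mk x.1) (quotientMapOfLE_smul (h x.1) g x.2)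

theorem sigmaQuotientMapOfLE_surjective {ι : Type*} {H H' : ι → Subgroup G}
    (h : ∀ i, H' i ≤ H i) : Function.Surjective (sigmaQuotientMapOfLE h) := by
  rintro ⟨i, y⟩
  obtain ⟨z, rfl⟩ := quotientMapOfLE_surjective (h i) y
  exact ⟨⟨i, z⟩, rfl⟩

variable [TopologicalSpace G]

theorem isOpen_stabilizer_subgroup {X : Type*} [MulAction G X] (K : Subgroup G) {x : X}
    (hx : IsOpen (stabilizer G x : Set G)) : IsOpen (stabilizer K x : Set K) :=
  hx.preimage continuous_subtype_val

theorem IsFair.exists_stabilizer_lt {K : Subgroup G} (hfair : IsFair G K) {H : Subgroup G}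
    (hHK : H ≤ K) (hH : IsOpen (H : Set G)) :
    ∃ H' : Subgroup G, ∃ h : H' ≤ H, IsOpen (H' : Set G) ∧
      ∀ y : G ⧸ H', stabilizer K y < stabilizer K (Subgroup.quotientMapOfLE h y) := by
  obtain ⟨H'', -, hH''open, hlt⟩ := hfair H hHK hH
  refine ⟨H'' ⊓ H, inf_le_right, hH''open.inter hH, fun y => ?_⟩
  induction y using QuotientGroup.induction_on with | H g => ?_
  show (stabilizer G (g : G ⧸ H'' ⊓ H)).subgroupOf K < (stabilizer G (g : G ⧸ H)).subgroupOf K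
  rw [stabilizer_quotientGroup_mk, stabilizer_quotientGroup_mk]
  refine lt_of_le_of_ne (Subgroup.comap_mono (Subgroup.map_mono inf_le_right)) fun heq => ?_
  rw [Subgroup.subgroupOf_inj, inf_comm, inf_comm (H.map _)] at heq
  exact (hlt g).not_ge (heq ▸ inf_le_inf_left K (Subgroup.map_mono inf_le_left))

variable [IsTopologicalGroup G]

theorem isOpen_stabilizer_quotient {H : Subgroup G} (hH : IsOpen (H : Set G)) (y : G ⧸ H) :
    IsOpen (stabilizer G y : Set G) := by
  induction y using QuotientGroup.induction_on with | H g => ?_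
  rw [stabilizer_quotientGroup_mk, Subgroup.map_equiv_eq_comap_symm']
  exact hH.preimage ((IsTopologicalGroup.continuous_conj g⁻¹).congr fun k => by simp)

end QuotientSets

attribute [local instance] Finsupp.comapSMul Finsupp.comapMulAction Finsupp.comapDistribMulAction

section PermutationModules

variable {G : Type} [Group G]

theorem Finsupp.comapSMul_smulCommClass {R M α : Type*} [Monoid R] [AddCommMonoid M]
    [DistribMulAction R M] [MulAction G α] : SMulCommClass G R (α →₀ M) :=
  ⟨fun _ c u => Finsupp.mapDomain_smul c u⟩

attribute [local instance] Finsupp.comapSMul_smulCommClass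

theorem Finsupp.apply_smul_of_smul_eq {M α : Type*} [AddCommMonoid M] [MulAction G α]
    {u : α →₀ M} {g : G} (hu : g • u = u) (x : α) : u (g • x) = u x :=
  calc u (g • x) = (g • u) (g • x) := by rw [hu]
    _ = u x := by rw [Finsupp.comapSMul_apply, inv_smul_smul]

theorem Finsupp.linearCombination_comapSMul {R P α : Type*} [Semiring R] [AddCommMonoid P]
    [Module R P] [DistribMulAction G P] [SMulCommClass G R P] [MulAction G α] {φ : α → P}
    (hφ : ∀ (g : G) (a : α), φ (g • a) = g • φ a) (g : G) (u : α →₀ R) :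
    Finsupp.linearCombination R φ (g • u) = g • Finsupp.linearCombination R φ u := by
  rw [Finsupp.comapSMul_def, Finsupp.linearCombination_mapDomain,
    Finsupp.linearCombination_apply, Finsupp.linearCombination_apply, Finsupp.sum, Finsupp.sum,
    Finset.smul_sum]
  exact Finset.sum_congr rfl fun a _ => by rw [Function.comp_apply, hφ, smul_comm g]

theorem Finsupp.mapDomain_comapSMul {M α β : Type*} [AddCommMonoid M] [MulAction G α]
    [MulAction G β] {π : β → α} (hπ : ∀ (g : G) (x : β), π (g • x) = g • π x) (g : G)
    (u : β →₀ M) : (g • u).mapDomain π = g • u.mapDomain π := by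
  simp only [Finsupp.comapSMul_def, ← Finsupp.mapDomain_comp]
  exact congrArg (Finsupp.mapDomain · u) (funext (hπ g))

variable [TopologicalSpace G] [IsTopologicalGroup G]

theorem smoothAction_finsupp (M : Type) [AddCommMonoid M] {α : Type} [MulAction G α]
    (hα : ∀ a : α, IsOpen (stabilizer G a : Set G)) : SmoothAction G (α →₀ M) := by
  intro u
  refine Subgroup.isOpen_of_mem_nhds _ (g := 1) (Filter.mem_of_superset
    ((isOpen_biInter_finset (s := u.support) fun a _ => hα a).mem_nhds (by simp)) fun k hk => ?_)
  simp only [Set.mem_iInter, SetLike.mem_coe, mem_stabilizer_iff] at hk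
  rw [SetLike.mem_coe, mem_stabilizer_iff, Finsupp.comapSMul_def]
  exact (Finsupp.mapDomain_congr hk).trans Finsupp.mapDomain_id

theorem isOpen_stabilizer_sigma_quotient {ι : Type} {H : ι → Subgroup G}
    (hH : ∀ i, IsOpen (H i : Set G)) (x : Σ i, G ⧸ H i) :
    IsOpen (stabilizer G x : Set G) := by
  obtain ⟨i, y⟩ := x
  rw [stabilizer_sigma_mk]
  exact isOpen_stabilizer_quotient (hH i) y

variable {F : Type} [Field F] {P : Type} [AddCommGroup P] [Module F P] [DistribMulAction G P]
  [SMulCommClass G F P]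

theorem IsProjectiveSmooth.exists_injective_sigma_quotient (hP : IsProjectiveSmooth F G P)
    (hPsmooth : SmoothAction G P) {H : P → Subgroup G} (hH : ∀ w, IsOpen (H w : Set G))
    (hHw : ∀ w, H w ≤ stabilizer G w) :
    ∃ s : P →ₗ[F] ((Σ w, G ⧸ H w) →₀ F),
      (∀ (g : G) (x : P), s (g • x) = g • s x) ∧ Function.Injective s := by
  let φ : (Σ w, G ⧸ H w) → P := fun x =>
    ofQuotientStabilizer G x.1 (Subgroup.quotientMapOfLE (hHw x.1) x.2)
  have hφ : ∀ (g : G) (x : Σ w, G ⧸ H w), φ (g • x) = g • φ x := by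
    rintro g ⟨w, y⟩
    simp only [φ, Sigma.smul_mk, quotientMapOfLE_smul, ofQuotientStabilizer_smul]
  have hφ_surj : Function.Surjective (Finsupp.linearCombination F φ) := fun w =>
    ⟨Finsupp.single ⟨w, (1 : G)⟩ 1, by simp [φ]⟩
  have hP' := hP ((Σ w, G ⧸ H w) →₀ F) P
  obtain ⟨s, hs, hφs⟩ := hP' (smoothAction_finsupp F (isOpen_stabilizer_sigma_quotient hH))
    hPsmooth _ (Finsupp.linearCombination_comapSMul hφ) hφ_surj LinearMap.id fun _ _ => rfl
  exact ⟨s, hs, Function.LeftInverse.injective (g := Finsupp.linearCombination F φ) hφs⟩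

theorem IsProjectiveSmooth.exists_lift_sigma_quotient (hP : IsProjectiveSmooth F G P)
    {ι : Type} {H H' : ι → Subgroup G} (hH : ∀ i, IsOpen (H i : Set G))
    (hH' : ∀ i, IsOpen (H' i : Set G)) (h : ∀ i, H' i ≤ H i)
    (q : P →ₗ[F] ((Σ i, G ⧸ H i) →₀ F)) (hq : ∀ (g : G) (x : P), q (g • x) = g • q x) :
    ∃ t : P →ₗ[F] ((Σ i, G ⧸ H' i) →₀ F), (∀ (g : G) (x : P), t (g • x) = g • t x) ∧
      ∀ x, (t x).mapDomain (sigmaQuotientMapOfLE h) = q x := by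
  have hP' := hP ((Σ i, G ⧸ H' i) →₀ F) ((Σ i, G ⧸ H i) →₀ F)
  exact hP' (smoothAction_finsupp F (isOpen_stabilizer_sigma_quotient hH'))
    (smoothAction_finsupp F (isOpen_stabilizer_sigma_quotient hH))
    (Finsupp.lmapDomain F F _) (Finsupp.mapDomain_comapSMul (sigmaQuotientMapOfLE_smul h))
    (Finsupp.mapDomain_surjective (sigmaQuotientMapOfLE_surjective h))
    q hq

end PermutationModules

theorem no_nonzero_projectives_of_fair_general
    (F : Type) [Field F] (p : ℕ) (hp : p ≠ 0) [CharP F p]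
    (G : Type) [Group G] [TopologicalSpace G] [IsTopologicalGroup G]
    (K : Subgroup G) (hKopen : IsOpen (K : Set G))
    [CompactSpace K]
    (hKproP : IsProPGroup p ↥K)
    (hfair : IsFair G K)
    (P : Type) [AddCommGroup P] [Module F P] [DistribMulAction G P] [SMulCommClass G F P]
    (hPsmooth : SmoothAction G P) (hPproj : IsProjectiveSmooth F G P) :
    Subsingleton P := by
  refine not_nontrivial_iff_subsingleton.mp fun _ => ?_
  have hprime : p.Prime := (CharP.char_is_prime_or_zero F p).resolve_right hp
  have hpsmul : ∀ {V : Type} [AddCommGroup V] [Module F V] (y : V), p • y = 0 := fun y => by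
    rw [← Nat.cast_smul_eq_nsmul F, CharP.cast_eq_zero, zero_smul]
  obtain ⟨v, hv0, hv⟩ := IsProPGroup.exists_ne_zero_forall_smul_eq_self hprime hKproP hpsmul
    fun x : P => isOpen_stabilizer_subgroup K (hPsmooth x)
  have hH : ∀ w : P, IsOpen ((K ⊓ stabilizer G w : Subgroup G) : Set G) :=
    fun w => hKopen.inter (hPsmooth w)
  choose H' hH'H hH'open hlt using fun w => hfair.exists_stabilizer_lt inf_le_left (hH w)
  obtain ⟨s, hs, hs_inj⟩ := hPproj.exists_injective_sigma_quotient hPsmooth hH fun _ => inf_le_right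
  obtain ⟨t, ht, hts⟩ := hPproj.exists_lift_sigma_quotient hH hH'open hH'H s hs
  have htv : (t v).mapDomain (sigmaQuotientMapOfLE hH'H) = 0 :=
    IsProPGroup.mapDomain_eq_zero_of_stabilizer_lt hprime hKproP hpsmul
      (fun k => sigmaQuotientMapOfLE_smul hH'H k)
      (fun x => isOpen_stabilizer_subgroup K (isOpen_stabilizer_sigma_quotient hH'open x))
      (fun ⟨w, y⟩ => by
        rw [stabilizer_subgroup_sigma_mk, sigmaQuotientMapOfLE, stabilizer_subgroup_sigma_mk]
        exact hlt w y)
      fun k => Finsupp.apply_smul_of_smul_eq ((ht k v).symm.trans (congrArg t (hv k)))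
  exact hv0 (hs_inj (by rw [← hts, htv, map_zero]))

/-- **Statement 3.**  Let `F` be a field of characteristic `p > 0`, let `G` be a locally
pro-`p` group, and suppose `G` admits an infinite open pro-`p` subgroup `K` such that the
pair `(G, K)` is fair.  Then the only projective object in the category `Mod_F(G)` of
smooth `F[G]`-modules is the zero module. -/
theorem no_nonzero_projectives_of_fair
    (F : Type) [Field F] (p : ℕ) (hp : p ≠ 0) [CharP F p]
    (G : Type) [Group G] [TopologicalSpace G] [IsTopologicalGroup G]
    (K : Subgroup G) (hKopen : IsOpen (K : Set G))
    [CompactSpace K] [T2Space K] [TotallyDisconnectedSpace K] [Infinite K]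
    (hKproP : IsProPGroup p ↥K)
    (hfair : IsFair G K)
    (P : Type) [AddCommGroup P] [Module F P] [DistribMulAction G P] [SMulCommClass G F P]
    (hPsmooth : SmoothAction G P) (hPproj : IsProjectiveSmooth F G P) :
    Subsingleton P :=
  no_nonzero_projectives_of_fair_general F p hp G K hKopen hKproP hfair P hPsmooth hPproj
end

section
/- Let G be a locally profinite group, K ⊆ G a profinite open subgroup, and C ⊆ G a closed central subgroup which is not open in G. Then the indices [K : U(C ∩ K)] become arbitrarily large: for every natural number n there exists an open subgroup U ⊆ K with [K : U(C ∩ K)] > n. -/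
/-!
Closed subgroups of a profinite group are intersections of open subgroups. The open subgroups
containing a closed subgroup `H` are closed under finite intersections, so if their indices were
bounded, one of maximal index would lie in all the others and hence equal `H`, making `H` open.
Applied to `H = C ∩ K` inside `K`, an open subgroup `N ⊇ C ∩ K` of large index gives `U = N`.
-/

namespace ProfiniteGrp

variable {K : Type*} [Group K] [TopologicalSpace K] [IsTopologicalGroup K] [CompactSpace K]
  [TotallyDisconnectedSpace K]

theorem exists_isOpen_ge_lt_index {H : Subgroup K} (hHclosed : IsClosed (H : Set K))
    (hHnotopen : ¬ IsOpen (H : Set K)) (n : ℕ) :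
    ∃ N : Subgroup K, IsOpen (N : Set K) ∧ H ≤ N ∧ n < N.index := by
  by_contra! hbound
  set S := {N : Subgroup K | IsOpen (N : Set K) ∧ H ≤ N}
  have hfinite : ∀ N ∈ S, N.FiniteIndex := fun N hN =>
    have := N.quotient_finite_of_isOpen hN.1
    Subgroup.finiteIndex_of_finite_quotient
  have hinf_mem : ∀ N ∈ S, ∀ M ∈ S, N ⊓ M ∈ S := fun N hN M hM =>
    ⟨hN.1.inter hM.1, le_inf hN.2 hM.2⟩
  have hbdd : BddAbove (Subgroup.index '' S) := ⟨n, by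
    rintro _ ⟨N, hN, rfl⟩
    exact hbound N hN.1 hN.2⟩
  obtain ⟨N₀, hN₀, hN₀max⟩ : ∃ N₀ ∈ S, N₀.index = sSup (Subgroup.index '' S) :=
    Nat.sSup_mem (Set.Nonempty.image _ (⟨⊤, isOpen_univ, le_top⟩ : S.Nonempty)) hbdd
  have hN₀le : N₀ ∈ lowerBounds S := by
    intro N hN
    have hN₀N := hinf_mem _ hN₀ _ hN
    have := hfinite _ hN₀N
    have hle : (N₀ ⊓ N).index ≤ N₀.index := hN₀max ▸ le_csSup hbdd ⟨_, hN₀N, rfl⟩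
    have heq : N₀ ⊓ N = N₀ := by
      by_contra hne
      exact (Subgroup.index_strictAnti (lt_of_le_of_ne inf_le_left hne)).not_ge hle
    exact inf_eq_left.mp heq
  have hN₀H : N₀ ≤ H :=
    (le_sInf hN₀le).trans_eq (closedSubgroup_eq_sInf_open ⟨H, hHclosed⟩).symm
  exact hHnotopen (Subgroup.isOpen_mono hN₀H hN₀.1)

end ProfiniteGrp

theorem Subgroup.isOpen_map_subtype {G : Type*} [Group G] [TopologicalSpace G] {K : Subgroup G}
    (hK : IsOpen (K : Set G)) {N : Subgroup K} (hN : IsOpen (N : Set K)) :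
    IsOpen (N.map K.subtype : Set G) :=
  hK.isOpenMap_subtype_val _ hN

theorem index_UCK_unbounded_general
    (G : Type) [Group G] [TopologicalSpace G] [IsTopologicalGroup G]
    (K : Subgroup G) (hKopen : IsOpen (K : Set G))
    [CompactSpace K] [TotallyDisconnectedSpace K]
    (C : Subgroup G)
    (hCclosed : IsClosed (C : Set G)) (hCnotopen : ¬ IsOpen (C : Set G))
    (n : ℕ) :
    ∃ U : Subgroup G, U ≤ K ∧ IsOpen (U : Set G) ∧ n < (U ⊔ (C ⊓ K)).relIndex K := by
  set H := C.subgroupOf K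
  have hHclosed : IsClosed (H : Set K) := hCclosed.preimage continuous_subtype_val
  have hHnotopen : ¬ IsOpen (H : Set K) := fun hHopen =>
    hCnotopen <| Subgroup.isOpen_mono inf_le_left <|
      Subgroup.subgroupOf_map_subtype C K ▸ Subgroup.isOpen_map_subtype hKopen hHopen
  obtain ⟨N, hNopen, hHN, hn⟩ := ProfiniteGrp.exists_isOpen_ge_lt_index hHclosed hHnotopen n
  refine ⟨N.map K.subtype, Subgroup.map_subtype_le N, Subgroup.isOpen_map_subtype hKopen hNopen, ?_⟩
  have hCK : C ⊓ K ≤ N.map K.subtype :=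
    Subgroup.subgroupOf_map_subtype C K ▸ Subgroup.map_mono hHN
  rwa [sup_eq_left.mpr hCK, Subgroup.relIndex, Subgroup.subgroupOf,
    Subgroup.comap_map_eq_self_of_injective K.subtype_injective]

/-- Let `G` be a locally profinite group, `K ⊆ G` a profinite open
subgroup, and `C ⊆ G` a closed central subgroup which is not open in `G`.  Then the indices
`[K : U(C ∩ K)]` become arbitrarily large: for every natural number `n` there exists an
open subgroup `U ⊆ K` with `[K : U(C ∩ K)] > n`.  (Since `C` is central, the set
`U(C ∩ K)` is the subgroup `U ⊔ (C ⊓ K)` of `K`, and `[K : U(C ∩ K)]` is its relative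
index in `K`.) -/
theorem index_UCK_unbounded
    (G : Type) [Group G] [TopologicalSpace G] [IsTopologicalGroup G]
    (K : Subgroup G) (hKopen : IsOpen (K : Set G))
    [CompactSpace K] [T2Space K] [TotallyDisconnectedSpace K]
    (C : Subgroup G) (hCcentral : C ≤ Subgroup.center G)
    (hCclosed : IsClosed (C : Set G)) (hCnotopen : ¬ IsOpen (C : Set G))
    (n : ℕ) :
    ∃ U : Subgroup G, U ≤ K ∧ IsOpen (U : Set G) ∧ n < (U ⊔ (C ⊓ K)).relIndex K :=
  index_UCK_unbounded_general G K hKopen C hCclosed hCnotopen n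
end

section
/- Let G be a locally profinite group, K ⊆ G a profinite open subgroup, and C ⊆ G a closed central subgroup. Then the pair (G,K) is C-fair if and only if the pair (G/C, KC/C) is fair, where KC/C is the (profinite, open) image of K in the quotient group G/C. -/
/-- For a closed central subgroup `C ⊆ G`, the pair `(G, K)` is *`C`-fair* if for every
open subgroup `H ⊆ K` there exists an open subgroup `H' ⊆ K` such that
`K ∩ gH'Cg⁻¹ ⊊ K ∩ gHCg⁻¹` (strict inclusion) for all `g ∈ G`.  (Since `C` is central,
the set `HC` is the subgroup `H ⊔ C`.) -/
def IsCFair (G : Type) [Group G] [TopologicalSpace G] (K C : Subgroup G) : Prop :=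
  ∀ H : Subgroup G, H ≤ K → IsOpen (H : Set G) →
    ∃ H' : Subgroup G, H' ≤ K ∧ IsOpen (H' : Set G) ∧
      ∀ g : G,
        K ⊓ Subgroup.map (MulAut.conj g).toMonoidHom (H' ⊔ C) <
          K ⊓ Subgroup.map (MulAut.conj g).toMonoidHom (H ⊔ C)

namespace Subgroup

variable {G Q : Type*} [Group G] [Group Q]

theorem map_inf_of_ker_le (f : G →* Q) (A : Subgroup G) {B : Subgroup G} (hB : f.ker ≤ B) :
    map f (A ⊓ B) = map f A ⊓ map f B := by
  refine le_antisymm (map_inf_le A B f) ?_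
  rintro - ⟨⟨a, ha, rfl⟩, ⟨b, hb, hba⟩⟩
  refine ⟨a, ⟨ha, ?_⟩, rfl⟩
  have hker : b⁻¹ * a ∈ f.ker := by rw [MonoidHom.mem_ker, map_mul, map_inv, hba, inv_mul_cancel]
  simpa using B.mul_mem hb (hB hker)

theorem map_comap_inf_eq_of_le_map {f : G →* Q} (hf : Function.Surjective f) {K : Subgroup G}
    {A : Subgroup Q} (hA : A ≤ map f K) : map f (comap f A ⊓ K) = A := by
  rw [inf_comm, map_inf_of_ker_le f K (MonoidHom.ker_le_comap f A),
    map_comap_eq_self_of_surjective hf, inf_eq_right.mpr hA]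

theorem inf_comap_map_inf_eq (f : G →* Q) (K : Subgroup G) {Y : Subgroup G} (hY : f.ker ≤ Y) :
    K ⊓ comap f (map f (K ⊓ Y)) = K ⊓ Y :=
  le_antisymm (inf_le_inf_left K (by rw [comap_map_eq]; exact sup_le inf_le_right hY))
    (le_inf inf_le_left (le_comap_map f _))

theorem inf_le_inf_iff_map_le_map (f : G →* Q) (K X : Subgroup G) {Y : Subgroup G}
    (hY : f.ker ≤ Y) : K ⊓ X ≤ K ⊓ Y ↔ map f (K ⊓ X) ≤ map f (K ⊓ Y) :=
  ⟨map_mono, fun h => inf_comap_map_inf_eq f K hY ▸ le_inf inf_le_left (map_le_iff_le_comap.mp h)⟩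

theorem inf_lt_inf_iff_map_lt_map (f : G →* Q) (K : Subgroup G) {X Y : Subgroup G}
    (hX : f.ker ≤ X) (hY : f.ker ≤ Y) : K ⊓ X < K ⊓ Y ↔ map f (K ⊓ X) < map f (K ⊓ Y) := by
  simp only [lt_iff_le_not_ge, inf_le_inf_iff_map_le_map f K _ hX,
    inf_le_inf_iff_map_le_map f K _ hY]

theorem map_map_conj (f : G →* Q) (g : G) (H : Subgroup G) :
    map f (map (MulAut.conj g).toMonoidHom H) =
      map (MulAut.conj (f g)).toMonoidHom (map f H) := by
  rw [map_map, map_map]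
  congr 1
  ext x
  simp

theorem ker_le_map_conj_sup_ker (f : G →* Q) (g : G) (H : Subgroup G) :
    f.ker ≤ map (MulAut.conj g).toMonoidHom (H ⊔ f.ker) := by
  rw [map_sup]
  exact le_sup_of_le_right (Normal.map_conj_eq f.ker g).ge

theorem map_inf_map_conj_sup_ker (f : G →* Q) (K H : Subgroup G) (g : G) :
    map f (K ⊓ map (MulAut.conj g).toMonoidHom (H ⊔ f.ker)) =
      map f K ⊓ map (MulAut.conj (f g)).toMonoidHom (map f H) := by
  rw [map_inf_of_ker_le f K (ker_le_map_conj_sup_ker f g H), map_map_conj, map_sup,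
    (map_eq_bot_iff f.ker).mpr le_rfl, sup_bot_eq]

theorem inf_map_conj_sup_ker_lt_iff (f : G →* Q) (K H H' : Subgroup G) (g : G) :
    K ⊓ map (MulAut.conj g).toMonoidHom (H' ⊔ f.ker) <
        K ⊓ map (MulAut.conj g).toMonoidHom (H ⊔ f.ker) ↔
      map f K ⊓ map (MulAut.conj (f g)).toMonoidHom (map f H') <
        map f K ⊓ map (MulAut.conj (f g)).toMonoidHom (map f H) := by
  rw [inf_lt_inf_iff_map_lt_map f K (ker_le_map_conj_sup_ker f g H')
      (ker_le_map_conj_sup_ker f g H), map_inf_map_conj_sup_ker, map_inf_map_conj_sup_ker]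

end Subgroup

theorem isCFair_iff_isFair_quotient_general
    (G : Type) [Group G] [TopologicalSpace G] [IsTopologicalGroup G]
    (K : Subgroup G) (hKopen : IsOpen (K : Set G))
    (C : Subgroup G) [C.Normal] :
    IsCFair G K C ↔ IsFair (G ⧸ C) (Subgroup.map (QuotientGroup.mk' C) K) := by
  set π := QuotientGroup.mk' C
  have hπ : Function.Surjective π := QuotientGroup.mk'_surjective C
  have lt_iff (g : G) (H H' : Subgroup G) :=
    QuotientGroup.ker_mk' C ▸ Subgroup.inf_map_conj_sup_ker_lt_iff π K H H' g
  have isOpen_comap_inf {A : Subgroup (G ⧸ C)} (hA : IsOpen (A : Set (G ⧸ C))) :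
      IsOpen ((A.comap π ⊓ K : Subgroup G) : Set G) :=
    (hA.preimage QuotientGroup.continuous_mk).inter hKopen
  constructor
  · intro hCFair A hAK hA
    obtain ⟨H', hH'K, hH', hlt⟩ := hCFair (A.comap π ⊓ K) inf_le_right (isOpen_comap_inf hA)
    refine ⟨H'.map π, Subgroup.map_mono hH'K, QuotientGroup.isOpenMap_coe _ hH', ?_⟩
    intro q
    obtain ⟨g, rfl⟩ := hπ q
    simpa only [Subgroup.map_comap_inf_eq_of_le_map hπ hAK] using (lt_iff g _ _).mp (hlt g)
  · intro hFair H hHK hH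
    obtain ⟨A, hAK, hA, hlt⟩ :=
      hFair (H.map π) (Subgroup.map_mono hHK) (QuotientGroup.isOpenMap_coe _ hH)
    refine ⟨A.comap π ⊓ K, inf_le_right, isOpen_comap_inf hA, fun g => (lt_iff g _ _).mpr ?_⟩
    rw [Subgroup.map_comap_inf_eq_of_le_map hπ hAK]
    exact hlt (π g)

/-- **Statement 7.**  Let `G` be a locally profinite group, `K ⊆ G` a profinite open
subgroup, and `C ⊆ G` a closed central subgroup.  Then the pair `(G, K)` is `C`-fair if and
only if the pair `(G/C, KC/C)` is fair, where `KC/C` is the image of `K` in the quotient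
group `G/C`. -/
theorem isCFair_iff_isFair_quotient
    (G : Type) [Group G] [TopologicalSpace G] [IsTopologicalGroup G]
    (K : Subgroup G) (hKopen : IsOpen (K : Set G))
    [CompactSpace K] [T2Space K] [TotallyDisconnectedSpace K]
    (C : Subgroup G) [C.Normal] (hCcentral : C ≤ Subgroup.center G)
    (hCclosed : IsClosed (C : Set G)) :
    IsCFair G K C ↔ IsFair (G ⧸ C) (Subgroup.map (QuotientGroup.mk' C) K) :=
  isCFair_iff_isFair_quotient_general G K hKopen C
end

section
/- Let G be a locally profinite group whose center Z(G) is non-discrete (in the subspace topology). Then the pair (G,K) is fair for every profinite open subgroup K ⊆ G. -/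
/-!
Since `Z(G)` is not discrete, every open subgroup `H ⊆ K` contains a central element `z ≠ 1`,
and since `K` is profinite, some open subgroup `U ⊆ K` misses `z`. Take `H' = H ∩ U`.
Conjugation fixes `z`, so for every `g` the element `z` lies in `K ∩ gHg⁻¹` but not in
`K ∩ gH'g⁻¹`.
-/

namespace Subgroup

variable {G : Type*} [Group G]

theorem mem_map_conj_iff_of_mem_center {z : G} (hz : z ∈ center G) (g : G) (H : Subgroup G) :
    z ∈ H.map (MulAut.conj g).toMonoidHom ↔ z ∈ H := by
  rw [mem_map_equiv, MulAut.conj_symm_apply, mem_center_iff.mp hz g⁻¹, inv_mul_cancel_right]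

theorem inf_map_conj_lt_of_mem_center {K H H' : Subgroup G} (hH' : H' ≤ H) {z : G}
    (hz : z ∈ center G) (hzK : z ∈ K) (hzH : z ∈ H) (hzH' : z ∉ H') (g : G) :
    K ⊓ H'.map (MulAut.conj g).toMonoidHom < K ⊓ H.map (MulAut.conj g).toMonoidHom :=
  SetLike.lt_iff_le_and_exists.mpr
    ⟨inf_le_inf_left _ (map_mono hH'), z,
      mem_inf.mpr ⟨hzK, (mem_map_conj_iff_of_mem_center hz g H).mpr hzH⟩,
      fun h => hzH' ((mem_map_conj_iff_of_mem_center hz g H').mp (mem_inf.mp h).2)⟩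

variable [TopologicalSpace G]

theorem isOpen_map_subtype_s8 {K : Subgroup G} (hK : IsOpen (K : Set G)) {N : Subgroup K}
    (hN : IsOpen (N : Set K)) : IsOpen (N.map K.subtype : Set G) := by
  rw [coe_map, coe_subtype]
  exact hK.isOpenMap_subtype_val _ hN

variable [IsTopologicalGroup G]

theorem exists_mem_ne_one_of_not_discreteTopology (S : Subgroup G) (hS : ¬ DiscreteTopology S)
    {U : Set G} (hU : IsOpen U) (h1 : (1 : G) ∈ U) : ∃ z ∈ S, z ∈ U ∧ z ≠ 1 := by
  by_contra! hcon
  refine hS (discreteTopology_iff_isOpen_singleton_one.mpr ?_)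
  convert hU.preimage continuous_subtype_val using 1
  ext x
  exact ⟨fun hx => hx ▸ h1, fun hx => Subtype.ext (hcon x x.2 hx)⟩

theorem exists_openSubgroup_notMem_of_ne_one {K : Type*} [Group K] [TopologicalSpace K]
    [IsTopologicalGroup K] [CompactSpace K] [T1Space K] [TotallyDisconnectedSpace K]
    {x : K} (hx : x ≠ 1) : ∃ N : OpenSubgroup K, x ∉ N := by
  obtain ⟨N, hN⟩ :=
    ProfiniteGrp.exist_openNormalSubgroup_sub_open_nhds_of_one isOpen_compl_singleton hx.symm
  exact ⟨N.toOpenSubgroup, fun h => hN h (Set.mem_singleton x)⟩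

theorem exists_isOpen_le_notMem_of_ne_one {K : Subgroup G} (hK : IsOpen (K : Set G))
    [CompactSpace K] [T1Space K] [TotallyDisconnectedSpace K] {x : G} (hxK : x ∈ K)
    (hx : x ≠ 1) : ∃ U : Subgroup G, U ≤ K ∧ IsOpen (U : Set G) ∧ x ∉ U := by
  obtain ⟨N, hxN⟩ := exists_openSubgroup_notMem_of_ne_one (x := (⟨x, hxK⟩ : K))
    (Subtype.coe_ne_coe.mp hx)
  refine ⟨(N : Subgroup K).map K.subtype, map_subtype_le _, isOpen_map_subtype_s8 hK N.isOpen, ?_⟩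
  exact fun h => hxN ((mem_map_iff_mem K.subtype_injective (x := ⟨x, hxK⟩)).mp h)

end Subgroup

theorem isFair_of_nondiscrete_center_general
    (G : Type) [Group G] [TopologicalSpace G] [IsTopologicalGroup G]
    (hZ : ¬ DiscreteTopology ↥(Subgroup.center G))
    (K : Subgroup G) (hKopen : IsOpen (K : Set G))
    [CompactSpace K] [T2Space K] [TotallyDisconnectedSpace K] :
    IsFair G K := by
  intro H hHK hHopen
  obtain ⟨z, hzZ, hzH, hz1⟩ :=
    (Subgroup.center G).exists_mem_ne_one_of_not_discreteTopology hZ hHopen H.one_mem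
  obtain ⟨U, hUK, hUopen, hzU⟩ := Subgroup.exists_isOpen_le_notMem_of_ne_one hKopen (hHK hzH) hz1
  exact ⟨H ⊓ U, inf_le_left.trans hHK, hHopen.inter hUopen,
    Subgroup.inf_map_conj_lt_of_mem_center inf_le_left hzZ (hHK hzH) hzH (fun h => hzU h.2)⟩

/-- **Statement 9.**  Let `G` be a locally profinite group whose center `Z(G)` is
non-discrete (in the subspace topology).  Then the pair `(G, K)` is fair for every
profinite open subgroup `K ⊆ G`. -/
theorem isFair_of_nondiscrete_center
    (G : Type) [Group G] [TopologicalSpace G] [IsTopologicalGroup G]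
    (hloc : ∃ K₀ : Subgroup G, IsOpen (K₀ : Set G) ∧ CompactSpace K₀ ∧ T2Space K₀ ∧
      TotallyDisconnectedSpace K₀)
    (hZ : ¬ DiscreteTopology ↥(Subgroup.center G))
    (K : Subgroup G) (hKopen : IsOpen (K : Set G))
    [CompactSpace K] [T2Space K] [TotallyDisconnectedSpace K] :
    IsFair G K :=
  isFair_of_nondiscrete_center_general G hZ K hKopen
end

section
/- Let G be a locally profinite group which has a weak Cartan decomposition, i.e., there exist a compact subset 𝒞 ⊆ G and a non-discrete subgroup S ⊆ G such that G = 𝒞 · Z_G(S) · 𝒞, where Z_G(S) is the centralizer of S in G. Then the pair (G,K) is fair for every compact open subgroup K ⊆ G. -/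
open Filter Topology

section

variable {G : Type*} [Group G] [TopologicalSpace G] [IsTopologicalGroup G]

lemma t2Space_of_isOpen_subgroup (K₀ : Subgroup G) (hK₀ : IsOpen (K₀ : Set G)) [T2Space K₀] :
    T2Space G := by
  rw [IsTopologicalGroup.t2Space_iff_one_closed]
  simpa using (K₀.isClosed_of_isOpen hK₀).isClosedEmbedding_subtypeVal.isClosedMap _
    (isClosed_singleton (x := (1 : K₀)))

lemma exists_openSubgroup_subset_of_isOpen_profinite (K₀ : Subgroup G)
    (hK₀ : IsOpen (K₀ : Set G)) [CompactSpace K₀] [TotallyDisconnectedSpace K₀] {U : Set G}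
    (hU : U ∈ 𝓝 (1 : G)) : ∃ W : Subgroup G, IsOpen (W : Set G) ∧ (W : Set G) ⊆ U := by
  obtain ⟨V, hVU, hVopen, hV1⟩ := mem_nhds_iff.mp hU
  obtain ⟨W, hW⟩ := ProfiniteGrp.exist_openNormalSubgroup_sub_open_nhds_of_one
    (hVopen.preimage continuous_subtype_val) (show (1 : K₀) ∈ (↑) ⁻¹' V from hV1)
  exact ⟨W.toSubgroup.map K₀.subtype, hK₀.isOpenMap_subtype_val _ W.isOpen,
    Set.image_subset_iff.mpr fun x hx => hVU (hW hx)⟩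

lemma eventually_forall_conj_mem {C U : Set G} (hC : IsCompact C) (hU : U ∈ 𝓝 (1 : G)) :
    ∀ᶠ x in 𝓝 (1 : G), ∀ c ∈ C, c * x * c⁻¹ ∈ U := by
  refine hC.eventually_forall_of_forall_eventually fun c _ => ?_
  exact (by fun_prop : Continuous fun p : G × G => p.2 * p.1 * p.2⁻¹).tendsto' (1, c) 1
    (by simp) hU

lemma exists_mem_ne_one_of_not_discreteTopology {S : Subgroup G} (hS : ¬ DiscreteTopology S)
    {P : G → Prop} (hP : ∀ᶠ x in 𝓝 (1 : G), P x) : ∃ s ∈ S, s ≠ 1 ∧ P s := by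
  by_contra! h
  obtain ⟨U, hUP, hUopen, hU1⟩ := mem_nhds_iff.mp hP
  refine hS (discreteTopology_of_isOpen_singleton_one ?_)
  convert hUopen.preimage continuous_subtype_val
  ext ⟨s, hs⟩
  simp only [Set.mem_singleton_iff, Set.mem_preimage, Subgroup.mk_eq_one]
  exact ⟨fun h1 => h1 ▸ hU1, fun hsU => by_contra fun h1 => h s hs h1 (hUP hsU)⟩

end

lemma conj_conj_eq_of_commute {G : Type*} [Group G] {z s : G} (h : Commute z s) (c c' : G) :
    (c * z * c') * (c'⁻¹ * s * c') * (c * z * c')⁻¹ = c * s * c⁻¹ := by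
  calc (c * z * c') * (c'⁻¹ * s * c') * (c * z * c')⁻¹ = c * (z * s) * z⁻¹ * c⁻¹ := by group
    _ = c * s * c⁻¹ := by rw [h.eq]; group

lemma isFair_of_exists_conj_mem {G : Type} [Group G] [TopologicalSpace G] {K : Subgroup G}
    (h : ∀ H : Subgroup G, H ≤ K → IsOpen (H : Set G) →
      ∃ W : Subgroup G, IsOpen (W : Set G) ∧ ∀ g : G, ∃ y ∈ H, y ∉ W ∧ g * y * g⁻¹ ∈ K) :
    IsFair G K := by
  intro H hHK hHopen
  obtain ⟨W, hWopen, hW⟩ := h H hHK hHopen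
  refine ⟨H ⊓ W, inf_le_left.trans hHK, hHopen.inter hWopen, fun g => ?_⟩
  obtain ⟨y, hyH, hyW, hyK⟩ := hW g
  refine SetLike.lt_iff_le_and_exists.mpr
    ⟨inf_le_inf_left K (Subgroup.map_mono inf_le_left), g * y * g⁻¹, ⟨hyK, y, hyH, rfl⟩, ?_⟩
  rintro ⟨-, y', ⟨-, hy'W⟩, hy'⟩
  exact hyW ((MulAut.conj g).injective hy' ▸ hy'W)

theorem isFair_of_weakCartan_general
    (G : Type) [Group G] [TopologicalSpace G] [IsTopologicalGroup G]
    (hloc : ∃ K₀ : Subgroup G, IsOpen (K₀ : Set G) ∧ CompactSpace K₀ ∧ T2Space K₀ ∧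
      TotallyDisconnectedSpace K₀)
    (C : Set G) (S : Subgroup G)
    (hCcompact : IsCompact C)
    (hSnondiscrete : ¬ DiscreteTopology ↥S)
    (hCartan : ∀ g : G, ∃ c ∈ C, ∃ z ∈ Subgroup.centralizer (S : Set G), ∃ c' ∈ C,
      g = c * z * c')
    (K : Subgroup G) (hKopen : IsOpen (K : Set G)) :
    IsFair G K := by
  obtain ⟨K₀, hK₀open, _, _, _⟩ := hloc
  have := t2Space_of_isOpen_subgroup K₀ hK₀open
  refine isFair_of_exists_conj_mem fun H _ hHopen => ?_
  have hsmall : ∀ᶠ x in 𝓝 (1 : G), ∀ c ∈ C, c * x * c⁻¹ ∈ K ∧ c⁻¹ * x * c ∈ H :=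
    ((eventually_forall_conj_mem hCcompact (hKopen.mem_nhds K.one_mem)).and
      (eventually_forall_conj_mem hCcompact.inv (hHopen.mem_nhds H.one_mem))).mono
      fun x hx c hc => ⟨hx.1 c hc, by simpa using hx.2 c⁻¹ (by simpa)⟩
  obtain ⟨s, hsS, hs1, hs⟩ := exists_mem_ne_one_of_not_discreteTopology hSnondiscrete hsmall
  set D := (fun c => c⁻¹ * s * c) '' C
  have hD : IsCompact D := hCcompact.image (by fun_prop)
  have h1D : (1 : G) ∉ D := fun ⟨c, _, hc⟩ => hs1 <| by
    rwa [mul_eq_one_iff_eq_inv, mul_eq_left] at hc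
  obtain ⟨W, hWopen, hW⟩ := exists_openSubgroup_subset_of_isOpen_profinite K₀ hK₀open
    (hD.isClosed.isOpen_compl.mem_nhds h1D)
  refine ⟨W, hWopen, fun g => ?_⟩
  obtain ⟨c, hc, z, hz, c', hc', rfl⟩ := hCartan g
  refine ⟨c'⁻¹ * s * c', (hs c' hc').2, fun hW' => hW hW' ⟨c', hc', rfl⟩, ?_⟩
  rw [conj_conj_eq_of_commute (Subgroup.mem_centralizer_iff.mp hz s hsS).symm]
  exact (hs c hc).1

/-- Let `G` be a locally profinite group which has a weak Cartan
decomposition, i.e. there exist a compact subset `𝒞 ⊆ G` and a non-discrete subgroup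
`S ⊆ G` such that `G = 𝒞 ⋅ Z_G(S) ⋅ 𝒞`, where `Z_G(S)` is the centralizer of `S` in `G`.
Then the pair `(G, K)` is fair for every compact open subgroup `K ⊆ G`. -/
theorem isFair_of_weakCartan
    (G : Type) [Group G] [TopologicalSpace G] [IsTopologicalGroup G]
    (hloc : ∃ K₀ : Subgroup G, IsOpen (K₀ : Set G) ∧ CompactSpace K₀ ∧ T2Space K₀ ∧
      TotallyDisconnectedSpace K₀)
    (C : Set G) (S : Subgroup G)
    (hCcompact : IsCompact C)
    (hSnondiscrete : ¬ DiscreteTopology ↥S)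
    (hCartan : ∀ g : G, ∃ c ∈ C, ∃ z ∈ Subgroup.centralizer (S : Set G), ∃ c' ∈ C,
      g = c * z * c')
    (K : Subgroup G) (hKcompact : IsCompact (K : Set G)) (hKopen : IsOpen (K : Set G)) :
    IsFair G K :=
  isFair_of_weakCartan_general G hloc C S hCcompact hSnondiscrete hCartan K hKopen
end

section
/- Let G be a topological group with a weak Cartan decomposition G = 𝒞 · Z_G(S) · 𝒞 (𝒞 ⊆ G a compact subset, S ⊆ G a non-discrete subgroup), and let A be a closed central subgroup of G such that A ∩ S is not open in S. Then the quotient group G/A has a weak Cartan decomposition: writing B̄ ⊆ G/A for the image of a subset B ⊆ G under the quotient map, one has G/A = 𝒞̄ · Z_{G/A}(S̄) · 𝒞̄, with 𝒞̄ compact and S̄ a non-discrete subgroup of G/A. -/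
open Function

theorem Subgroup.not_discreteTopology_map {G H : Type*} [Group G] [Group H]
    [TopologicalSpace G] [TopologicalSpace H] (f : G →* H) (hf : Continuous f) (S : Subgroup G)
    (hker : ¬ IsOpen {s : S | (s : G) ∈ f.ker}) : ¬ DiscreteTopology (S.map f) := by
  intro hdisc
  apply hker
  have hcont : Continuous (f.subgroupMap S) :=
    (hf.comp continuous_subtype_val).subtype_mk _
  convert (isOpen_discrete ({1} : Set (S.map f))).preimage hcont using 1
  ext s
  simp [Subtype.ext_iff]

theorem exists_mul_mul_of_surjective {G H F : Type*} [Mul G] [Mul H] [FunLike F G H]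
    [MulHomClass F G H] (f : F) (hf : Surjective f) {C Z : Set G} {Z' : Set H}
    (hZ : f '' Z ⊆ Z') (hdecomp : ∀ g, ∃ c ∈ C, ∃ z ∈ Z, ∃ c' ∈ C, g = c * z * c') :
    ∀ q, ∃ c ∈ f '' C, ∃ z ∈ Z', ∃ c' ∈ f '' C, q = c * z * c' := by
  intro q
  obtain ⟨g, rfl⟩ := hf q
  obtain ⟨c, hc, z, hz, c', hc', rfl⟩ := hdecomp g
  exact ⟨f c, ⟨c, hc, rfl⟩, f z, hZ ⟨z, hz, rfl⟩, f c', ⟨c', hc', rfl⟩, by simp only [map_mul]⟩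

theorem weakCartan_quotient_general
    (G : Type) [Group G] [TopologicalSpace G]
    (C : Set G) (S : Subgroup G)
    (hCcompact : IsCompact C)
    (hCartan : ∀ g : G, ∃ c ∈ C, ∃ z ∈ Subgroup.centralizer (S : Set G), ∃ c' ∈ C,
      g = c * z * c')
    (A : Subgroup G) [A.Normal]
    (hAS : ¬ IsOpen {s : ↥S | (s : G) ∈ A}) :
    IsCompact (QuotientGroup.mk '' C : Set (G ⧸ A)) ∧
    (¬ DiscreteTopology ↥(Subgroup.map (QuotientGroup.mk' A) S)) ∧
    ∀ q : G ⧸ A, ∃ c ∈ QuotientGroup.mk '' C,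
      ∃ z ∈ Subgroup.centralizer ((Subgroup.map (QuotientGroup.mk' A) S : Subgroup (G ⧸ A)) :
        Set (G ⧸ A)), ∃ c' ∈ QuotientGroup.mk '' C, q = c * z * c' := by
  refine ⟨hCcompact.image continuous_quot_mk, ?_, ?_⟩
  · exact S.not_discreteTopology_map (QuotientGroup.mk' A) continuous_quot_mk
      (by rwa [QuotientGroup.ker_mk'])
  · have hZ : QuotientGroup.mk' A '' Subgroup.centralizer (S : Set G) ⊆
        Subgroup.centralizer (S.map (QuotientGroup.mk' A) : Set (G ⧸ A)) := by
      rw [Subgroup.coe_map, ← Subgroup.coe_map]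
      exact Subgroup.map_centralizer_le_centralizer_image _ _
    exact exists_mul_mul_of_surjective (QuotientGroup.mk' A) (QuotientGroup.mk'_surjective A)
      hZ hCartan

/-- **Statement 12.**  Let `G` be a topological group with a weak Cartan decomposition
`G = 𝒞 ⋅ Z_G(S) ⋅ 𝒞` (`𝒞 ⊆ G` a compact subset, `S ⊆ G` a non-discrete subgroup), and let
`A` be a closed central subgroup of `G` such that `A ∩ S` is not open in `S`.  Then the
quotient group `G/A` has a weak Cartan decomposition: writing `B̄ ⊆ G/A` for the image of a
subset `B ⊆ G` under the quotient map, one has `G/A = 𝒞̄ ⋅ Z_{G/A}(S̄) ⋅ 𝒞̄`, with `𝒞̄`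
compact and `S̄` a non-discrete subgroup of `G/A`. -/
theorem weakCartan_quotient
    (G : Type) [Group G] [TopologicalSpace G] [IsTopologicalGroup G]
    (C : Set G) (S : Subgroup G)
    (hCcompact : IsCompact C)
    (hSnondiscrete : ¬ DiscreteTopology ↥S)
    (hCartan : ∀ g : G, ∃ c ∈ C, ∃ z ∈ Subgroup.centralizer (S : Set G), ∃ c' ∈ C,
      g = c * z * c')
    (A : Subgroup G) [A.Normal] (hAcentral : A ≤ Subgroup.center G)
    (hAclosed : IsClosed (A : Set G))
    (hAS : ¬ IsOpen {s : ↥S | (s : G) ∈ A}) :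
    IsCompact (QuotientGroup.mk '' C : Set (G ⧸ A)) ∧
    (¬ DiscreteTopology ↥(Subgroup.map (QuotientGroup.mk' A) S)) ∧
    ∀ q : G ⧸ A, ∃ c ∈ QuotientGroup.mk '' C,
      ∃ z ∈ Subgroup.centralizer ((Subgroup.map (QuotientGroup.mk' A) S : Subgroup (G ⧸ A)) :
        Set (G ⧸ A)), ∃ c' ∈ QuotientGroup.mk '' C, q = c * z * c' :=
  weakCartan_quotient_general G C S hCcompact hCartan A hAS
end
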